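/- For every integer s ≥ 1 and every 0 < p < 1: (i) g(sp) ≤ h⁰_{{1,2}}(s,p) ≤ g(sp) + (1 + 1/√e)·p/(1−p); and (ii) h⁰_{J_sym}(s,p) ≤ (1/2)·(g(sp) + e^{−2sp}·g(−sp)) + (1/2)·(1 + 2·e^{−3/4})·p/(1−p) + ((4e^{3/2} − 1)/(6e³))·p²/(1−p²)². -/

import Mathlib

open Real
open scoped Classical

/-- `h⁰_J(s,p) = ((1−p)^s/p²)·(p²/(1−p)^{s+1} + (p/s)/(1−p)^s − Σ_{k∈J} k·(k+s−2)!/((k−1)!·s!)·p^k)`. -/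
noncomputable def h0J (J : Set ℕ) (s : ℕ) (p : ℝ) : ℝ :=
  ((1-p)^s / p^2) *
    (p^2 / (1-p)^(s+1) + (p/(s:ℝ)) * (1 / (1-p)^s)
      - ∑' k : ℕ, if k ∈ J then
          (k:ℝ) * ((Nat.factorial (k+s-2) : ℝ) / ((Nat.factorial (k-1) : ℝ) * (Nat.factorial s : ℝ))) * p^k
        else 0)

/-- `J_sym = {2} ∪ {odd positive integers}`. -/
def Jsym : Set ℕ := {2} ∪ {k | Odd k}

/-- `g(x) = 1 − 2e^{−x} + (1 − e^{−x})/x`. -/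
noncomputable def gfun (x : ℝ) : ℝ := 1 - 2 * Real.exp (-x) + (1 - Real.exp (-x)) / x

lemma log_series_shift {x : ℝ} (hx : |x| < 1) :
    HasSum (fun n : ℕ => x ^ (n + 2) / ((n : ℝ) + 2)) (-Real.log (1 - x) - x) := by
  have HL := Real.hasSum_pow_div_log_of_abs_lt_one hx
  have H := (hasSum_nat_add_iff' (f := fun n : ℕ => x ^ (n + 1) / ((n:ℕ) + 1 : ℝ)) 1).mpr HL
  simp only [Finset.range_one, Finset.sum_singleton] at H
  convert H using 2 with n
  · rfl
  · push_cast; ring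
  · norm_num

lemma delta_upper {p : ℝ} (hp : 0 < p) (hp1 : p < 1) :
    -Real.log (1-p) - p ≤ p^2/(2*(1-p)) := by
  have h1p : (1:ℝ) - p ≠ 0 := by intro h; nlinarith
  have hap : |p| < 1 := by rw [abs_lt]; constructor <;> linarith
  have HL := log_series_shift hap
  have HG : HasSum (fun n : ℕ => p ^ (n + 2) / 2) (p^2/(2*(1-p))) := by
    have h := (hasSum_geometric_of_lt_one hp.le hp1).mul_left (p^2/2)
    rw [show (fun i : ℕ => p^2/2 * p^i) = (fun n : ℕ => p^(n+2)/2) from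
      funext fun n => by ring] at h
    rwa [show p^2/2 * (1-p)⁻¹ = p^2/(2*(1-p)) from by field_simp] at h
  refine hasSum_le (fun n => ?_) HL HG
  exact div_le_div_of_nonneg_left (by positivity) (by norm_num) (by
    push_cast
    linarith [Nat.cast_nonneg (α := ℝ) n])

lemma t_series {p : ℝ} (hp : 0 < p) (hp1 : p < 1) :
    HasSum (fun n : ℕ => (p ^ (n + 2) - (-p) ^ (n + 2)) / (2 * ((n : ℝ) + 2)))
      ((Real.log (1+p) - Real.log (1-p)) / 2 - p) := by
  have hap : |p| < 1 := by rw [abs_lt]; constructor <;> linarith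
  have ham : |(-p)| < 1 := by rw [abs_neg]; exact hap
  have Hp := log_series_shift hap
  have Hm := log_series_shift ham
  have H := (Hp.sub Hm).div_const 2
  rw [show (1:ℝ) - -p = 1 + p from by ring] at H
  rw [show (fun i : ℕ => (p ^ (i + 2) / ((i:ℝ) + 2) - (-p) ^ (i + 2) / ((i:ℝ) + 2)) / 2)
      = (fun n : ℕ => (p ^ (n + 2) - (-p) ^ (n + 2)) / (2 * ((n : ℝ) + 2))) from
    funext fun n => by
      have hn0 : ((n:ℝ)+2) ≠ 0 := by positivity
      rw [div_sub_div_same, div_div]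
      ring_nf] at H
  rwa [show (-Real.log (1-p) - p - (-Real.log (1+p) - -p))/2
      = (Real.log (1+p) - Real.log (1-p)) / 2 - p from by ring] at H

lemma term_nonneg {p : ℝ} (hp : 0 < p) (n : ℕ) : (0:ℝ) ≤ p ^ (n+2) - (-p) ^ (n+2) := by
  rcases Nat.even_or_odd (n+2) with h | h
  · rw [h.neg_pow]; linarith
  · rw [h.neg_pow]; nlinarith [pow_nonneg hp.le (n+2)]

lemma t_lower {p : ℝ} (hp : 0 < p) (hp1 : p < 1) :
    p ≤ (Real.log (1+p) - Real.log (1-p)) / 2 := by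
  have H := t_series hp hp1
  have h0 : (0:ℝ) ≤ (Real.log (1+p) - Real.log (1-p)) / 2 - p := by
    refine hasSum_le (fun n => ?_) hasSum_zero H
    exact div_nonneg (term_nonneg hp n) (by positivity)
  linarith

lemma t_upper {p : ℝ} (hp : 0 < p) (hp1 : p < 1) :
    (Real.log (1+p) - Real.log (1-p)) / 2 - p ≤ p^3/(3*(1-p^2)) := by
  have h1p : (1:ℝ) - p ≠ 0 := by intro h; nlinarith
  have h2p : (1:ℝ) + p ≠ 0 := by intro h; nlinarith
  have hap : |p| < 1 := by rw [abs_lt]; constructor <;> linarith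
  have ham : ‖(-p)‖ < 1 := by rw [norm_neg, Real.norm_eq_abs]; exact hap
  have H := t_series hp hp1
  have HG : HasSum (fun n : ℕ => (p ^ (n + 2) - (-p) ^ (n + 2)) / 6) (p^3/(3*(1-p^2))) := by
    have h1 := (hasSum_geometric_of_lt_one hp.le hp1).mul_left (p^2/6)
    have h2 := (hasSum_geometric_of_norm_lt_one ham).mul_left (p^2/6)
    have h := h1.sub h2
    rw [show (fun i : ℕ => p^2/6 * p^i - p^2/6 * (-p)^i)
        = (fun n : ℕ => (p ^ (n + 2) - (-p) ^ (n + 2)) / 6) from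
      funext fun n => by ring] at h
    rwa [show p^2/6 * (1-p)⁻¹ - p^2/6 * (1 - -p)⁻¹ = p^3/(3*(1-p^2)) from by
      rw [show (1:ℝ) - -p = 1 + p from by ring]
      rw [show (1:ℝ) - p^2 = (1-p)*(1+p) from by ring]
      field_simp
      ring] at h
  refine hasSum_le (fun n => ?_) H HG
  rcases Nat.eq_zero_or_pos n with rfl | hn
  · rw [show ((-p):ℝ)^(0+2) = p^(0+2) from by ring]
    simp
  · have hn' : (1:ℝ) ≤ (n:ℝ) := by exact_mod_cast hn
    gcongr
    · exact term_nonneg hp n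
    · linarith

lemma exp_fact1 {x : ℝ} : 2*x + 1 ≤ 2 * Real.exp (x - 1/2) := by
  nlinarith [Real.add_one_le_exp (x - 1/2)]

lemma exp_fact2 {x : ℝ} (hx : 0 < x) : x * Real.exp (-x) ≤ Real.exp (-1) := by
  have h := Real.add_one_le_exp (x - 1)
  have e : Real.exp (x - 1) * Real.exp (-x) = Real.exp (-1) := by
    rw [← Real.exp_add]; ring_nf
  nlinarith [Real.exp_pos (-x), Real.exp_pos (x-1)]

lemma exp_fact3 {x : ℝ} (hx : 0 < x) : 2*x * Real.exp (-(2*x)) ≤ Real.exp (-1) := by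
  have := exp_fact2 (x := 2*x) (by linarith)
  linarith

lemma exp_fact4 {x : ℝ} : (2*x+1) * Real.exp (-x) ≤ 2 * Real.exp (-(1/2)) := by
  have h := exp_fact1 (x := x)
  have e : Real.exp (x - 1/2) * Real.exp (-x) = Real.exp (-(1/2)) := by
    rw [← Real.exp_add]; ring_nf
  nlinarith [Real.exp_pos (-x), Real.exp_pos (x - 1/2)]

lemma sqrt_exp_one : 1 / Real.sqrt (Real.exp 1) = Real.exp (-(1/2)) := by
  rw [show Real.exp 1 = Real.exp (1/2) * Real.exp (1/2) from by rw [← Real.exp_add]; norm_num,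
    Real.sqrt_mul_self (Real.exp_pos _).le, one_div, ← Real.exp_neg]

lemma exp_fact5 : Real.exp (-1) / 6 ≤ Real.exp (-(3/4)) - Real.exp (-1) := by
  have h : (7:ℝ)/6 ≤ Real.exp (1/4) := by nlinarith [Real.add_one_le_exp (1/4 : ℝ)]
  have e : Real.exp (1/4) * Real.exp (-1) = Real.exp (-(3/4)) := by
    rw [← Real.exp_add]; norm_num
  nlinarith [Real.exp_pos (-1)]

lemma hasSumF (m : ℕ) {p : ℝ} (hp : |p| < 1) :
    HasSum (fun k : ℕ => (k:ℝ) * ((Nat.factorial (k+(m+1)-2) : ℝ) /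
        ((Nat.factorial (k-1) : ℝ) * (Nat.factorial (m+1) : ℝ))) * p^k)
      (p^2/(1-p)^(m+2) + (p/((m:ℝ)+1)) * (1/(1-p)^(m+1))) := by
  have hp' : ‖p‖ < 1 := by simpa [Real.norm_eq_abs] using hp
  have h1p : (1:ℝ) - p ≠ 0 := by
    have := abs_lt.mp hp
    intro h; nlinarith [this.1, this.2]
  have H1 := (hasSum_choose_mul_geometric_of_norm_lt_one (k := m+1) hp').mul_left p
  have H2 := (hasSum_choose_mul_geometric_of_norm_lt_one (k := m) hp').mul_left
      (p * (m:ℝ) / ((m:ℝ)+1))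
  have H := H1.sub H2
  have hkey : (fun n : ℕ => p * (((n + (m+1)).choose (m+1) : ℝ) * p ^ n)
      - p * (m:ℝ) / ((m:ℝ)+1) * (((n + m).choose m : ℝ) * p ^ n))
      = (fun n : ℕ => (fun k : ℕ => (k:ℝ) * ((Nat.factorial (k+(m+1)-2) : ℝ) /
        ((Nat.factorial (k-1) : ℝ) * (Nat.factorial (m+1) : ℝ))) * p^k) (n+1)) := by
    funext n
    simp only
    have e1 : n + 1 + (m+1) - 2 = n + m := by omega
    have e2 : n + 1 - 1 = n := by omega
    rw [e1, e2]
    have c1 : ((n + (m+1)).choose (m+1) : ℝ) =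
        (Nat.factorial (n+m+1) : ℝ) / ((Nat.factorial (m+1) : ℝ) * (Nat.factorial n : ℝ)) := by
      rw [Nat.cast_choose ℝ (by omega), Nat.add_sub_cancel,
        show n+(m+1) = n+m+1 from by omega]
    have c2 : ((n + m).choose m : ℝ) =
        (Nat.factorial (n+m) : ℝ) / ((Nat.factorial m : ℝ) * (Nat.factorial n : ℝ)) := by
      rw [Nat.cast_choose ℝ (by omega), Nat.add_sub_cancel]
    rw [c1, c2]
    have f1 : (Nat.factorial (n+m+1) : ℝ) = ((n:ℝ)+m+1) * Nat.factorial (n+m) := by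
      rw [show n+m+1 = (n+m)+1 from rfl, Nat.factorial_succ]; push_cast; ring
    have f2 : (Nat.factorial (m+1) : ℝ) = ((m:ℝ)+1) * Nat.factorial m := by
      rw [Nat.factorial_succ]; push_cast; ring
    rw [f1, f2]
    have hm : (Nat.factorial m : ℝ) ≠ 0 := by positivity
    have hn : (Nat.factorial n : ℝ) ≠ 0 := by positivity
    have hm1 : ((m:ℝ)+1) ≠ 0 := by positivity
    field_simp
    push_cast
    ring
  rw [hkey] at H
  have hS : p * (1 / (1 - p) ^ (m + 1 + 1)) - p * (m:ℝ) / ((m:ℝ)+1) * (1 / (1 - p) ^ (m + 1))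
      = p^2/(1-p)^(m+2) + (p/((m:ℝ)+1)) * (1/(1-p)^(m+1)) := by
    have hm1 : ((m:ℝ)+1) ≠ 0 := by positivity
    field_simp
    ring
  rw [hS] at H
  refine (hasSum_nat_add_iff' 1).mp ?_
  convert H using 1
  simp

lemma h1_eq (m : ℕ) {p : ℝ} (hp : 0 < p) (hp1 : p < 1) :
    h0J {1, 2} (m+1) p
      = 1/(1-p) - 2*(1-p)^(m+1) + (1-(1-p)^(m+1))/(((m:ℝ)+1)*p) := by
  have h1p : (0:ℝ) < 1 - p := by linarith
  have hm1 : ((m:ℝ)+1) ≠ 0 := by positivity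
  rw [h0J]
  rw [tsum_eq_sum (s := ({1, 2} : Finset ℕ)) (by
      intro b hb
      have : b ∉ ({1, 2} : Set ℕ) := by
        simpa [Set.mem_insert_iff] using (by simpa using hb : ¬(b = 1 ∨ b = 2))
      simp [this])]
  rw [Finset.sum_insert (by decide), Finset.sum_singleton]
  have h1 : (1 : ℕ) ∈ ({1, 2} : Set ℕ) := by simp
  have h2 : (2 : ℕ) ∈ ({1, 2} : Set ℕ) := by simp
  simp only [if_pos h1, if_pos h2, show 2+(m+1)-2 = m+1 from by omega,
    show (1:ℕ)+(m+1)-2 = m from by omega, show (2:ℕ)-1 = 1 from rfl,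
    show (1:ℕ)-1 = 0 from rfl]
  simp only [Nat.factorial_succ, Nat.factorial_zero, Nat.factorial_one]
  push_cast
  have hmf : (Nat.factorial m : ℝ) ≠ 0 := by positivity
  have hps : (1-p)^(m+1) ≠ 0 := by positivity
  field_simp
  ring

lemma h2_eq (m : ℕ) {p : ℝ} (hp : 0 < p) (hp1 : p < 1) :
    h0J Jsym (m+1) p
      = 1/(2*(1-p)) + ((1-p)/(1+p))^(m+1)/(2*(1+p))
        + (1 - ((1-p)/(1+p))^(m+1))/(2*(((m:ℝ)+1)*p)) - 2*(1-p)^(m+1) := by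
  have h1p : (0:ℝ) < 1 - p := by linarith
  have h2p : (0:ℝ) < 1 + p := by linarith
  have hm1 : ((m:ℝ)+1) ≠ 0 := by positivity
  have hap : |p| < 1 := by rw [abs_lt]; constructor <;> linarith
  have ham : |(-p)| < 1 := by rw [abs_neg]; exact hap
  have Hp := hasSumF m hap
  have Hm := hasSumF m ham
  have Hodd := ((Hp.sub Hm).div_const 2).add (hasSum_ite_eq 2 (2*p^2))
  rw [h0J, tsum_congr (g := fun k : ℕ =>
      ((k:ℝ) * ((Nat.factorial (k+(m+1)-2) : ℝ) /
          ((Nat.factorial (k-1) : ℝ) * (Nat.factorial (m+1) : ℝ))) * p^k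
        - (k:ℝ) * ((Nat.factorial (k+(m+1)-2) : ℝ) /
          ((Nat.factorial (k-1) : ℝ) * (Nat.factorial (m+1) : ℝ))) * (-p)^k) / 2
      + if k = 2 then 2*p^2 else 0) (by
    intro k
    by_cases hk2 : k = 2
    · subst hk2
      have hmem : (2 : ℕ) ∈ Jsym := by simp [Jsym]
      rw [if_pos hmem, if_pos rfl]
      rw [show ((-p):ℝ)^2 = p^2 from by ring]
      simp only [show 2+(m+1)-2 = m+1 from by omega, show (2:ℕ)-1 = 1 from rfl,
        Nat.factorial_one]
      push_cast
      have hf : (Nat.factorial (m+1) : ℝ) ≠ 0 := by positivity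
      field_simp
      ring
    · by_cases hodd : Odd k
      · have hmem : k ∈ Jsym := Or.inr hodd
        rw [if_pos hmem, if_neg hk2, Odd.neg_pow hodd]
        ring
      · have hmem : k ∉ Jsym := by
          intro h
          rcases h with h | h
          · exact hk2 (by simpa using h)
          · exact hodd h
        rw [if_neg hmem, if_neg hk2, Even.neg_pow (Nat.not_odd_iff_even.mp hodd)]
        ring), Hodd.tsum_eq]
  have hps : (1-p)^(m+1) ≠ 0 := by positivity
  have hqs : (1+p)^(m+1) ≠ 0 := by positivity
  have e1 : (1:ℝ) - -p = 1 + p := by ring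
  rw [e1, div_pow]
  have hpow2 : ((1:ℝ)+p)^(m+2) = (1+p)^(m+1) * (1+p) := by ring
  have hpow2' : ((1:ℝ)-p)^(m+2) = (1-p)^(m+1) * (1-p) := by ring
  field_simp
  push_cast
  ring

set_option maxHeartbeats 1600000

theorem stmt19 (s : ℕ) (hs : 1 ≤ s) (p : ℝ) (hp : 0 < p) (hp1 : p < 1) :
    (gfun ((s:ℝ)*p) ≤ h0J {1, 2} s p ∧
      h0J {1, 2} s p ≤ gfun ((s:ℝ)*p) + (1 + 1 / Real.sqrt (Real.exp 1)) * p / (1 - p))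
    ∧ h0J Jsym s p ≤
        (1/2) * (gfun ((s:ℝ)*p) + Real.exp (-2*(s:ℝ)*p) * gfun (-((s:ℝ)*p)))
        + (1/2) * (1 + 2 * Real.exp (-(3/4))) * p / (1 - p)
        + ((4 * Real.exp (3/2) - 1) / (6 * Real.exp 3)) * p^2 / (1 - p^2)^2 := by
  obtain ⟨m, rfl⟩ : ∃ m, s = m + 1 := ⟨s - 1, by omega⟩
  clear hs
  have hcast : ((m+1 : ℕ) : ℝ) = (m:ℝ) + 1 := by push_cast; ring
  simp only [hcast]
  have h1p : (0:ℝ) < 1 - p := by linarith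
  have h2p : (0:ℝ) < 1 + p := by linarith
  have hs1 : (1:ℝ) ≤ (m:ℝ) + 1 := by
    have := Nat.cast_nonneg (α := ℝ) m; linarith
  set x : ℝ := ((m:ℝ)+1) * p with hxd
  clear_value x
  have hx : 0 < x := by rw [hxd]; positivity
  have hpx : p ≤ x := by nlinarith
  -- basic log facts
  have hlog : Real.log (1-p) ≤ -p := by
    have := Real.log_le_sub_one_of_pos h1p
    linarith
  have hδ0 : 0 ≤ -Real.log (1-p) - p := by linarith
  have hδ : -Real.log (1-p) - p ≤ p^2/(2*(1-p)) := delta_upper hp hp1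
  set δ : ℝ := -Real.log (1-p) - p with hδd
  clear_value δ
  -- r = (1-p)^(m+1)
  set r : ℝ := (1-p)^(m+1) with hrd
  clear_value r
  have hr : r = Real.exp (-x) * Real.exp (-(((m:ℝ)+1) * δ)) := by
    rw [hrd, ← Real.exp_log h1p, ← Real.exp_nat_mul, ← Real.exp_add, hcast]
    congr 1
    rw [hxd, hδd]; ring
  set a : ℝ := Real.exp (-x) with had
  clear_value a
  have ha : 0 < a := by rw [had]; exact Real.exp_pos _
  have hra : r ≤ a := by
    rw [hr]
    nlinarith [Real.exp_le_one_iff.mpr (by nlinarith : -(((m:ℝ)+1) * δ) ≤ 0)]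
  have hr0 : 0 < r := by rw [hrd]; positivity
  have hE : a - r ≤ a * (((m:ℝ)+1) * δ) := by
    have h1 : 1 - (((m:ℝ)+1) * δ) ≤ Real.exp (-(((m:ℝ)+1) * δ)) := by
      nlinarith [Real.add_one_le_exp (-(((m:ℝ)+1) * δ))]
    rw [hr]
    nlinarith
  have hEδ : a - r ≤ a * (((m:ℝ)+1) * (p^2/(2*(1-p)))) := by
    have : a * (((m:ℝ)+1) * δ) ≤ a * (((m:ℝ)+1) * (p^2/(2*(1-p)))) := by
      apply mul_le_mul_of_nonneg_left _ ha.le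
      apply mul_le_mul_of_nonneg_left hδ (by positivity)
    exact hE.trans this
  -- Part (i)
  have h1eq := h1_eq m hp hp1
  rw [← hxd, ← hrd] at h1eq
  have part1a : gfun x ≤ h0J {1, 2} (m+1) p := by
    rw [h1eq]
    simp only [gfun]
    rw [← had]
    have heq : (1-r)/x = (1-a)/x + (a-r)/x := by
      rw [← add_div]; ring_nf
    have hEx : 0 ≤ (a-r)/x := div_nonneg (by linarith) hx.le
    have hfrac : 1 ≤ 1/(1-p) := by rw [le_div_iff₀ h1p]; linarith
    linarith
  have part1b : h0J {1, 2} (m+1) p ≤ gfun x + (1 + 1 / Real.sqrt (Real.exp 1)) * p / (1 - p) := by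
    rw [h1eq, sqrt_exp_one]
    simp only [gfun]
    rw [← had]
    set c : ℝ := Real.exp (-(1/2)) with hcd
    clear_value c
    have hc : 0 < c := by rw [hcd]; exact Real.exp_pos _
    have key1 : a * (2*x+1) ≤ 2 * c := by
      have := exp_fact4 (x := x); rw [← had, ← hcd] at this; linarith
    have P : (2*x+1) * (a - r) ≤ c * (x * (p/(1-p))) := by
      have s1 : (2*x+1) * (a - r) ≤ (2*x+1) * (a * (((m:ℝ)+1) * (p^2/(2*(1-p))))) :=
        mul_le_mul_of_nonneg_left hEδ (by positivity)
      have s2 : (2*x+1) * (a * (((m:ℝ)+1) * (p^2/(2*(1-p)))))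
          = (a * (2*x+1)) * (((m:ℝ)+1) * (p^2/(2*(1-p)))) := by ring
      have s3 : (a * (2*x+1)) * (((m:ℝ)+1) * (p^2/(2*(1-p))))
          ≤ (2*c) * (((m:ℝ)+1) * (p^2/(2*(1-p)))) := by
        apply mul_le_mul_of_nonneg_right key1 (by positivity)
      have s4 : (2*c) * (((m:ℝ)+1) * (p^2/(2*(1-p)))) = c * (x * (p/(1-p))) := by
        rw [hxd]; field_simp
      linarith
    have P2 : (2*x+1) * (a-r) / x ≤ c * (p/(1-p)) := by
      rw [div_le_iff₀ hx]
      have : c * (p/(1-p)) * x = c * (x * (p/(1-p))) := by ring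
      linarith
    have heq2 : (2*x+1) * (a-r) / x = 2*(a-r) + (a-r)/x := by
      field_simp
    have heq : (1-r)/x = (1-a)/x + (a-r)/x := by
      rw [← add_div]; ring_nf
    have heq1 : 1/(1-p) = 1 + p/(1-p) := by field_simp; ring
    have heq3 : (1 + c) * p / (1-p) = p/(1-p) + c * (p/(1-p)) := by ring
    linarith
  refine ⟨⟨part1a, part1b⟩, ?_⟩
  clear part1a part1b h1eq
  -- Part (ii)
  rw [show -2*((m:ℝ)+1)*p = -(2*x) from by rw [hxd]; ring]
  have h2eq := h2_eq m hp hp1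
  rw [← hxd, ← hrd] at h2eq
  rw [h2eq]
  clear h2eq
  set t : ℝ := (Real.log (1+p) - Real.log (1-p)) / 2 with htd
  clear_value t
  have ht1 : p ≤ t := by rw [htd]; exact t_lower hp hp1
  have ht2 : t - p ≤ p^3/(3*(1-p^2)) := by rw [htd]; exact t_upper hp hp1
  set q : ℝ := ((1-p)/(1+p))^(m+1) with hqd
  clear_value q
  set a2 : ℝ := Real.exp (-(2*x)) with ha2d
  clear_value a2
  have ha2 : 0 < a2 := by rw [ha2d]; exact Real.exp_pos _
  have hq : q = a2 * Real.exp (-(2*(((m:ℝ)+1)) * (t - p))) := by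
    rw [hqd, show (1-p)/(1+p) = Real.exp (Real.log (1-p) - Real.log (1+p)) from by
        rw [Real.exp_sub, Real.exp_log h1p, Real.exp_log h2p],
      ← Real.exp_nat_mul, ha2d, ← Real.exp_add, hcast]
    congr 1
    rw [htd, hxd]; ring
  have hq0 : 0 < q := by rw [hqd]; positivity
  have hy0 : 0 ≤ 2*(((m:ℝ)+1)) * (t - p) := by
    apply mul_nonneg (by positivity)
    linarith
  have hqa2 : q ≤ a2 := by
    have he : Real.exp (-(2*(((m:ℝ)+1)) * (t - p))) ≤ 1 :=
      Real.exp_le_one_iff.mpr (by linarith)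
    have h2 := mul_le_mul_of_nonneg_left he ha2.le
    rw [hq]
    simpa using h2
  have hq2 : a2 - q ≤ a2 * (2*(((m:ℝ)+1)) * (t - p)) := by
    have h1 : 1 - 2*(((m:ℝ)+1)) * (t - p) ≤ Real.exp (-(2*(((m:ℝ)+1)) * (t - p))) := by
      have := Real.add_one_le_exp (-(2*(((m:ℝ)+1)) * (t - p)))
      linarith
    have h2 := mul_le_mul_of_nonneg_left h1 ha2.le
    have h3 : a2 * (1 - 2*(((m:ℝ)+1)) * (t - p)) = a2 - a2 * (2*(((m:ℝ)+1)) * (t - p)) := by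
      ring
    rw [hq]
    linarith
  -- M equality
  have hexpx : Real.exp x = (Real.exp (-x))⁻¹ := by rw [← Real.exp_neg, neg_neg]
  have ha2a : a2 = a * a := by rw [ha2d, had, ← Real.exp_add]; ring_nf
  have Meq : (1/2) * (gfun x + a2 * gfun (-x)) = 1/2 + a2/2 - 2*a + (1-a2)/(2*x) := by
    simp only [gfun, neg_neg]
    rw [hexpx, ha2a, ← had]
    have hane : a ≠ 0 := ne_of_gt ha
    field_simp
    ring
  rw [Meq]
  -- inequality chain
  have e1 : 1/(2*(1-p)) = 1/2 + (1/2)*(p/(1-p)) := by field_simp; ring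
  have T2 : q/(2*(1+p)) ≤ a2/2 := by
    have h1 : q/(2*(1+p)) ≤ q/2 :=
      div_le_div_of_nonneg_left hq0.le (by norm_num) (by linarith)
    linarith
  have e2 : (1-q)/(2*x) = (1-a2)/(2*x) + (a2-q)/(2*x) := by
    rw [← add_div]; ring_nf
  have hpp2 : (0:ℝ) < 1 - p^2 := by nlinarith [mul_pos h1p h2p]
  have C3 : (a2-q)/(2*x) ≤ (Real.exp (-(3/4)) - Real.exp (-1)) * (p/(1-p)) := by
    have s1 : (a2-q)/(2*x) ≤ a2 * (p^2/(3*(1-p^2))) := by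
      rw [div_le_iff₀ (by linarith : (0:ℝ) < 2*x)]
      have b1 : a2 - q ≤ a2 * (2*(((m:ℝ)+1)) * (p^3/(3*(1-p^2)))) := by
        have h := mul_le_mul_of_nonneg_left ht2
          (mul_nonneg ha2.le (by positivity) : (0:ℝ) ≤ a2 * (2*(((m:ℝ)+1))))
        have e : a2 * (2*(((m:ℝ)+1))) * (t - p) = a2 * (2*(((m:ℝ)+1)) * (t - p)) := by ring
        have e' : a2 * (2*(((m:ℝ)+1))) * (p^3/(3*(1-p^2)))
            = a2 * (2*(((m:ℝ)+1)) * (p^3/(3*(1-p^2)))) := by ring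
        linarith only [hq2, h, e, e']
      have b2 : a2 * (2*(((m:ℝ)+1)) * (p^3/(3*(1-p^2)))) = a2 * (p^2/(3*(1-p^2))) * (2*x) := by
        rw [hxd]; field_simp
      linarith only [b1, b2]
    have s2 : a2 ≤ Real.exp (-(2*p)) := by
      rw [ha2d]
      apply Real.exp_le_exp.mpr
      linarith only [hpx]
    have s3 : 2*p*Real.exp (-(2*p)) ≤ Real.exp (-1) := exp_fact3 hp
    have key : a2 * p ≤ Real.exp (-1) / 2 := by
      have h := mul_le_mul_of_nonneg_right s2 hp.le
      linarith only [h, s3]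
    have s4 : a2 * (p^2/(3*(1-p^2))) ≤ Real.exp (-1) * (p/(6*(1-p^2))) := by
      have e : a2 * (p^2/(3*(1-p^2))) = (a2*p) * (p/(3*(1-p^2))) := by ring
      have h := mul_le_mul_of_nonneg_right key
        (le_of_lt (div_pos hp (by linarith : (0:ℝ) < 3*(1-p^2))))
      have e2 : (Real.exp (-1)/2) * (p/(3*(1-p^2))) = Real.exp (-1) * (p/(6*(1-p^2))) := by
        have hne : (1:ℝ) - p^2 ≠ 0 := ne_of_gt hpp2
        field_simp
        ring
      linarith only [e, h, e2]
    have s5 : Real.exp (-1) * (p/(6*(1-p^2))) ≤ Real.exp (-1) * (p/(6*(1-p))) := by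
      apply mul_le_mul_of_nonneg_left _ (Real.exp_pos _).le
      apply div_le_div_of_nonneg_left hp.le (by linarith : (0:ℝ) < 6*(1-p))
      nlinarith [mul_pos hp h1p]
    have s6 : Real.exp (-1) * (p/(6*(1-p))) ≤ (Real.exp (-(3/4)) - Real.exp (-1)) * (p/(1-p)) := by
      have h5 := exp_fact5
      have hpp : 0 ≤ p/(1-p) := le_of_lt (div_pos hp h1p)
      have h := mul_le_mul_of_nonneg_right h5 hpp
      have e : Real.exp (-1) * (p/(6*(1-p))) = (Real.exp (-1)/6) * (p/(1-p)) := by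
        field_simp
      linarith only [h, e]
    linarith only [s1, s4, s5, s6]
  have C4 : 2*(a - r) ≤ Real.exp (-1) * (p/(1-p)) := by
    have s1 : 2*(a-r) ≤ 2*(a * (((m:ℝ)+1) * (p^2/(2*(1-p))))) := by linarith
    have s2 : 2*(a * (((m:ℝ)+1) * (p^2/(2*(1-p))))) = (x * a) * (p/(1-p)) := by
      rw [hxd]; field_simp
    have s3 : x * a ≤ Real.exp (-1) := by
      have := exp_fact2 hx; rw [← had] at this; linarith
    have s4 : (x * a) * (p/(1-p)) ≤ Real.exp (-1) * (p/(1-p)) := by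
      apply mul_le_mul_of_nonneg_right s3 (by positivity)
    linarith
  have e3 : (1/2) * (1 + 2*Real.exp (-(3/4))) * p / (1-p)
      = (1/2)*(p/(1-p)) + Real.exp (-(3/4)) * (p/(1-p)) := by
    field_simp
  have hCp2 : 0 ≤ (4 * Real.exp (3/2) - 1) / (6 * Real.exp 3) * p^2 / (1-p^2)^2 := by
    have h1 : (1:ℝ) ≤ Real.exp (3/2) := Real.one_le_exp (by norm_num)
    have h3 : 0 ≤ (4 * Real.exp (3/2) - 1) / (6 * Real.exp 3) :=
      div_nonneg (by linarith) (by positivity)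
    exact div_nonneg (mul_nonneg h3 (sq_nonneg p)) (sq_nonneg _)
  linarith only [e1, T2, e2, C3, C4, e3, hCp2]
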